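/- arXiv:2007.08084 — 2 statements merged into one kernel-verified Lean document; each statement's English description precedes it below -/
import Mathlib

section
/- If σ₁ = (α₁, β₁) is a splitting of G into U and σ₂ = (α₂, β₂) is a splitting of U into H, then the composition defined by α(v) = ⋃_{u ∈ α₁(v)} α₂(u) and β(e) = ⋃_{f ∈ β₁(e)} β₂(f) is a splitting of G into H. -/
/-- A splitting of a graph `G` into a graph `H` (Feuilloley et al.): a pair `σ = (α, β)`
where the sets `α v` (the avatars of `v`) partition `V(H)`, and for every edge
`e = {u, v}` of `G`, `β e` is a non-empty matching between `α u` and `α v` consisting of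
edges of `H`; moreover every edge of `H` arises from some edge of `G`. -/
structure Splitting {VG VH : Type} (G : SimpleGraph VG) (H : SimpleGraph VH) where
  α : VG → Set VH
  β : Sym2 VG → Set (Sym2 VH)
  α_nonempty : ∀ v : VG, (α v).Nonempty
  α_partition : ∀ x : VH, ∃! v : VG, x ∈ α v
  β_edge : ∀ e ∈ G.edgeSet, β e ⊆ H.edgeSet
  β_nonempty : ∀ e ∈ G.edgeSet, (β e).Nonempty
  β_not_edge : ∀ e, e ∉ G.edgeSet → β e = ∅
  β_endpoints : ∀ (u v : VG) (h : G.Adj u v) (f : Sym2 VH), f ∈ β s(u, v) →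
    ∃ a ∈ α u, ∃ b ∈ α v, f = s(a, b)
  β_matching : ∀ e ∈ G.edgeSet, (β e).Pairwise fun f f' => ∀ x : VH, x ∈ f → x ∉ f'
  β_cover : ∀ f ∈ H.edgeSet, ∃ e ∈ G.edgeSet, f ∈ β e

/-!
Each axiom of the composed splitting is inherited from the two given ones; the only one
needing an argument is the matching property: two edges of `H` coming from the same edge `g`
of `U` are disjoint because `σ₂.β g` is a matching, and two edges coming from different
edges `g ≠ g'` of `σ₁.β e` cannot share a vertex `x`, since `x` lies in the avatar set of a
single vertex of `U`, which would then be a common endpoint of `g` and `g'`.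
-/

namespace Splitting

variable {VG VU VH : Type} {G : SimpleGraph VG} {U : SimpleGraph VU} {H : SimpleGraph VH}

theorem eq_of_mem_α (σ : Splitting G H) {x : VH} {u v : VG} (hu : x ∈ σ.α u)
    (hv : x ∈ σ.α v) : u = v :=
  (σ.α_partition x).unique hu hv

theorem exists_mem_α_of_mem_β (σ : Splitting G H) {e : Sym2 VG} (he : e ∈ G.edgeSet)
    {f : Sym2 VH} (hf : f ∈ σ.β e) {x : VH} (hx : x ∈ f) : ∃ u ∈ e, x ∈ σ.α u := by
  induction e using Sym2.ind with
  | _ u v =>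
    obtain ⟨a, ha, b, hb, rfl⟩ := σ.β_endpoints u v he f hf
    rcases Sym2.mem_iff.mp hx with rfl | rfl
    · exact ⟨u, Sym2.mem_mk_left u v, ha⟩
    · exact ⟨v, Sym2.mem_mk_right u v, hb⟩

theorem pairwise_disjoint_biUnion_β (σ₁ : Splitting G U) (σ₂ : Splitting U H) {e : Sym2 VG}
    (he : e ∈ G.edgeSet) :
    (⋃ g ∈ σ₁.β e, σ₂.β g).Pairwise fun f f' => ∀ x : VH, x ∈ f → x ∉ f' := by
  intro f hf f' hf' hne x hxf hxf'
  obtain ⟨g, hg, hfg⟩ := Set.mem_iUnion₂.mp hf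
  obtain ⟨g', hg', hfg'⟩ := Set.mem_iUnion₂.mp hf'
  have hgU := σ₁.β_edge e he hg
  by_cases hgg : g = g'
  · subst hgg
    exact σ₂.β_matching g hgU hfg hfg' hne x hxf hxf'
  · obtain ⟨a, hag, hxa⟩ := σ₂.exists_mem_α_of_mem_β hgU hfg hxf
    obtain ⟨a', hag', hxa'⟩ := σ₂.exists_mem_α_of_mem_β (σ₁.β_edge e he hg') hfg' hxf'
    obtain rfl := σ₂.eq_of_mem_α hxa hxa'
    exact σ₁.β_matching e he hg hg' hgg a hag hag'

def comp (σ₁ : Splitting G U) (σ₂ : Splitting U H) : Splitting G H where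
  α v := ⋃ u ∈ σ₁.α v, σ₂.α u
  β e := ⋃ g ∈ σ₁.β e, σ₂.β g
  α_nonempty v := by
    obtain ⟨u, hu⟩ := σ₁.α_nonempty v
    obtain ⟨x, hx⟩ := σ₂.α_nonempty u
    exact ⟨x, Set.mem_biUnion hu hx⟩
  α_partition x := by
    obtain ⟨u, hu, -⟩ := σ₂.α_partition x
    obtain ⟨v, hv, -⟩ := σ₁.α_partition u
    refine ⟨v, Set.mem_biUnion hv hu, fun v' hv' => ?_⟩
    obtain ⟨u', hu'v', hxu'⟩ := Set.mem_iUnion₂.mp hv'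
    obtain rfl := σ₂.eq_of_mem_α hu hxu'
    exact σ₁.eq_of_mem_α hu'v' hv
  β_edge e he := Set.iUnion₂_subset fun _ hg => σ₂.β_edge _ (σ₁.β_edge e he hg)
  β_nonempty e he := by
    obtain ⟨g, hg⟩ := σ₁.β_nonempty e he
    obtain ⟨f, hf⟩ := σ₂.β_nonempty g (σ₁.β_edge e he hg)
    exact ⟨f, Set.mem_biUnion hg hf⟩
  β_not_edge e he := by simp [σ₁.β_not_edge e he]
  β_endpoints u v huv f hf := by
    obtain ⟨g, hg, hfg⟩ := Set.mem_iUnion₂.mp hf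
    obtain ⟨a, ha, b, hb, rfl⟩ := σ₁.β_endpoints u v huv g hg
    obtain ⟨p, hp, q, hq, rfl⟩ := σ₂.β_endpoints a b (σ₁.β_edge _ huv hg) f hfg
    exact ⟨p, Set.mem_biUnion ha hp, q, Set.mem_biUnion hb hq, rfl⟩
  β_matching e he := pairwise_disjoint_biUnion_β σ₁ σ₂ he
  β_cover f hf := by
    obtain ⟨g, hg, hfg⟩ := σ₂.β_cover f hf
    obtain ⟨e, he, hge⟩ := σ₁.β_cover g hg
    exact ⟨e, he, Set.mem_biUnion hge hfg⟩

end Splitting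

/-- **Composition of splittings.** If `σ₁ = (α₁, β₁)` is a splitting of `G` into `U` and
`σ₂ = (α₂, β₂)` is a splitting of `U` into `H`, then the composition defined by
`α v = ⋃_{u ∈ α₁ v} α₂ u` and `β e = ⋃_{f ∈ β₁ e} β₂ f` is a splitting of `G` into `H`. -/
theorem splitting_comp {VG VU VH : Type} (G : SimpleGraph VG) (U : SimpleGraph VU)
    (H : SimpleGraph VH) (σ₁ : Splitting G U) (σ₂ : Splitting U H) :
    ∃ σ : Splitting G H,
      (∀ v : VG, σ.α v = ⋃ u ∈ σ₁.α v, σ₂.α u) ∧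
      (∀ e : Sym2 VG, σ.β e = ⋃ f ∈ σ₁.β e, σ₂.β f) :=
  ⟨σ₁.comp σ₂, fun _ => rfl, fun _ => rfl⟩
end

section
/- Distributed spanning-tree certification is sound: let G be a connected graph, and suppose every vertex v is assigned a value root(v) and a natural number d(v), and a pointer p(v) (with p(v) = ⊥ for at most the vertices with d(v) = 0), such that for every edge {u,v}, root(u) = root(v), and for every vertex v with d(v) > 0, p(v) is a neighbor of v with d(p(v)) = d(v) - 1. Then the set of edges {v, p(v)} over vertices with d(v) > 0 contains no cycle, and every vertex reaches a vertex of d-value 0 by iterating p; if moreover exactly one vertex has d(v) = 0, these edges form a spanning tree of G. -/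
/-!
Every edge `{v, p v}` runs from a vertex to one of strictly smaller `d`-value, so at a vertex
of maximal `d`-value on a cycle both cycle edges would have to be its parent edge: there is no
cycle. Following parent pointers strictly decreases `d`, hence ends at a vertex of value `0`
along tree edges; when that vertex is unique, every vertex is joined to it, so the forest is a
tree, and it lies inside `G` because parents are neighbours.
-/

namespace SimpleGraph

variable {V : Type*}

theorem isAcyclic_of_adj_le_unique {α : Type*} [LinearOrder α] {G : SimpleGraph V} (f : V → α)
    (h : ∀ u x y, G.Adj u x → G.Adj u y → f x ≤ f u → f y ≤ f u → x = y) : G.IsAcyclic := by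
  classical
  intro v c hc
  obtain ⟨u, hu, hmax⟩ :=
    Set.exists_max_image {w | w ∈ c.support} f c.support.finite_toSet ⟨v, c.start_mem_support⟩
  have hc' : (c.rotate u hu).IsCycle := hc.rotate hu
  have hle : ∀ w ∈ (c.rotate u hu).support, f w ≤ f u :=
    fun w hw => hmax w ((c.mem_support_rotate_iff u hu).1 hw)
  exact hc'.snd_ne_penultimate <|
    h u _ _ (Walk.adj_snd hc'.not_nil) (Walk.adj_penultimate hc'.not_nil).symm
      (hle _ (Walk.getVert_mem_support _ _)) (hle _ (Walk.getVert_mem_support _ _))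

def parentGraph (d : V → ℕ) (p : V → V) : SimpleGraph V :=
  fromRel fun a b => (0 < d a ∧ p a = b) ∨ (0 < d b ∧ p b = a)

variable {d : V → ℕ} {p : V → V}

theorem parentGraph_adj_parent (hdec : ∀ v, 0 < d v → d (p v) < d v) {v : V} (hv : 0 < d v) :
    (parentGraph d p).Adj v (p v) :=
  (fromRel_adj _ _ _).2 ⟨fun h => (hdec v hv).ne (congrArg d h).symm, .inl (.inl ⟨hv, rfl⟩)⟩

theorem parent_eq_of_parentGraph_adj_of_le (hdec : ∀ v, 0 < d v → d (p v) < d v) {u x : V}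
    (hux : (parentGraph d p).Adj u x) (hle : d x ≤ d u) : p u = x := by
  rcases ((fromRel_adj _ _ _).1 hux).2 with (⟨-, h⟩ | ⟨hx, h⟩) | (⟨hx, h⟩ | ⟨-, h⟩)
  · exact h
  · exact absurd (h ▸ hdec x hx) hle.not_gt
  · exact absurd (h ▸ hdec x hx) hle.not_gt
  · exact h

theorem parentGraph_isAcyclic (hdec : ∀ v, 0 < d v → d (p v) < d v) :
    (parentGraph d p).IsAcyclic :=
  isAcyclic_of_adj_le_unique d fun _ _ _ hx hy hxu hyu =>
    (parent_eq_of_parentGraph_adj_of_le hdec hx hxu).symm.trans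
      (parent_eq_of_parentGraph_adj_of_le hdec hy hyu)

theorem exists_iterate_eq_zero_and_reachable (hdec : ∀ v, 0 < d v → d (p v) < d v) (v : V) :
    ∃ m, d (p^[m] v) = 0 ∧ (parentGraph d p).Reachable v (p^[m] v) := by
  induction h : d v using Nat.strong_induction_on generalizing v with
  | _ n ih =>
    rcases Nat.eq_zero_or_pos (d v) with hv | hv
    · exact ⟨0, hv, .refl v⟩
    · obtain ⟨m, hm, hreach⟩ := ih _ (h ▸ hdec v hv) (p v) rfl
      exact ⟨m + 1, hm, (parentGraph_adj_parent hdec hv).reachable.trans hreach⟩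

theorem parentGraph_le {G : SimpleGraph V} (hadj : ∀ v, 0 < d v → G.Adj v (p v)) :
    parentGraph d p ≤ G := by
  intro a b hab
  rcases ((fromRel_adj _ _ _).1 hab).2 with (⟨ha, rfl⟩ | ⟨hb, rfl⟩) | (⟨hb, rfl⟩ | ⟨ha, rfl⟩)
  · exact hadj a ha
  · exact (hadj b hb).symm
  · exact (hadj b hb).symm
  · exact hadj a ha

theorem parentGraph_connected (hdec : ∀ v, 0 < d v → d (p v) < d v) (hroot : ∃! r, d r = 0) :
    (parentGraph d p).Connected := by
  obtain ⟨r, -, hunique⟩ := hroot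
  have hreach (v : V) : (parentGraph d p).Reachable v r := by
    obtain ⟨m, hm, hreach⟩ := exists_iterate_eq_zero_and_reachable hdec v
    exact hunique _ hm ▸ hreach
  exact (connected_iff _).2 ⟨fun a b => (hreach a).trans (hreach b).symm, ⟨r⟩⟩

end SimpleGraph

theorem spanning_tree_certification_sound_general {V : Type}
    (G : SimpleGraph V)
    (d : V → ℕ) (p : V → V)
    (hp : ∀ v : V, 0 < d v → G.Adj v (p v) ∧ d (p v) = d v - 1) :
    (SimpleGraph.fromRel fun a b => (0 < d a ∧ p a = b) ∨ (0 < d b ∧ p b = a)).IsAcyclic ∧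
    (∀ v : V, ∃ m : ℕ, d (p^[m] v) = 0) ∧
    ((∃! v : V, d v = 0) →
      (SimpleGraph.fromRel fun a b => (0 < d a ∧ p a = b) ∨ (0 < d b ∧ p b = a)) ≤ G ∧
      (SimpleGraph.fromRel fun a b => (0 < d a ∧ p a = b) ∨ (0 < d b ∧ p b = a)).IsTree) := by
  have hdec (v : V) (hv : 0 < d v) : d (p v) < d v := by
    rw [(hp v hv).2]
    omega
  have hacyclic := SimpleGraph.parentGraph_isAcyclic hdec
  refine ⟨hacyclic, fun v => ?_, fun hroot => ⟨?_, ?_, hacyclic⟩⟩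
  · obtain ⟨m, hm, -⟩ := SimpleGraph.exists_iterate_eq_zero_and_reachable hdec v
    exact ⟨m, hm⟩
  · exact SimpleGraph.parentGraph_le fun v hv => (hp v hv).1
  · exact SimpleGraph.parentGraph_connected hdec hroot

/-- **Soundness of distributed spanning-tree certification.** Let `G` be a connected graph
whose vertices carry certificates: a root identifier `root v`, a distance value `d v`, and
a parent pointer `p v` (meaningful only when `d v > 0`). Suppose the certificates pass the
local tests: endpoints of every edge agree on the root identifier, and every vertex `v`
with `d v > 0` has `p v` as a neighbor with `d (p v) = d v - 1`. Then the set of edges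
`{v, p v}` over vertices with `d v > 0` contains no cycle, every vertex reaches a vertex
of `d`-value `0` by iterating `p`, and if moreover exactly one vertex has `d`-value `0`,
these edges form a spanning tree of `G`. -/
theorem spanning_tree_certification_sound {V : Type} [Fintype V] [DecidableEq V]
    (G : SimpleGraph V) (hG : G.Connected)
    (root : V → ℕ) (d : V → ℕ) (p : V → V)
    (hroot : ∀ u v : V, G.Adj u v → root u = root v)
    (hp : ∀ v : V, 0 < d v → G.Adj v (p v) ∧ d (p v) = d v - 1) :
    (SimpleGraph.fromRel fun a b => (0 < d a ∧ p a = b) ∨ (0 < d b ∧ p b = a)).IsAcyclic ∧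
    (∀ v : V, ∃ m : ℕ, d (p^[m] v) = 0) ∧
    ((∃! v : V, d v = 0) →
      (SimpleGraph.fromRel fun a b => (0 < d a ∧ p a = b) ∨ (0 < d b ∧ p b = a)) ≤ G ∧
      (SimpleGraph.fromRel fun a b => (0 < d a ∧ p a = b) ∨ (0 < d b ∧ p b = a)).IsTree) :=
  spanning_tree_certification_sound_general G d p hp
end
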